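/- Let Ω = A^ℤ with left shift T and T-invariant probability P with summable φ-mixing coefficient. Let q : ℕ → ℕ satisfy Assumption 2.1 (finitely many solutions to q(n) = k for each k, and only finitely many pairs m < n with q(n) ≤ q(m)). Let C_n be cylinders on intervals Λ_n = [l_n, r_n] such that Λ_m is right D-nested in Λ_n for all m < n (i.e. r_m < r_n + D). If ∑_{n=1}^N P(C_n) → ∞, then almost surely (∑_{n=1}^N 1_{C_n} ∘ T^{q(n)}) / (∑_{n=1}^N P(C_n)) → 1 as N → ∞. -/

import Mathlib

open MeasureTheory Filter

/-- The left shift on a two-sided sequence space. -/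
def shf {𝒜 : Type*} (ω : ℤ → 𝒜) : ℤ → 𝒜 := fun i => ω (i + 1)

/-- The cylinder set fixing coordinates on the interval `[l, r]` to agree with `f`. -/
def cylEvent {𝒜 : Type*} (l r : ℤ) (f : ℤ → 𝒜) : Set (ℤ → 𝒜) :=
  {ω | ∀ i : ℤ, l ≤ i → i ≤ r → ω i = f i}

/-- The σ-algebra generated by cylinder sets on intervals `[l, m]`, `l ≤ m`. -/
def pastAlg {𝒜 : Type*} (m : ℤ) : MeasurableSpace (ℤ → 𝒜) :=
  MeasurableSpace.generateFrom {S | ∃ (l : ℤ) (f : ℤ → 𝒜), S = cylEvent l m f}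

/-- The σ-algebra generated by cylinder sets on intervals `[m, r]`. -/
def futureAlg {𝒜 : Type*} (m : ℤ) : MeasurableSpace (ℤ → 𝒜) :=
  MeasurableSpace.generateFrom {S | ∃ (r : ℤ) (f : ℤ → 𝒜), S = cylEvent m r f}

/-!
Put `E n = T^{-q n} C_n`, `S_N = ∑_{n ≤ N} 1_{E n}` and `A_N = ∑_{n ≤ N} P(E n) = E[S_N]`.

Two letters of positive mass and shift invariance bound the mass of every one-letter cylinder by
some `β < 1`; mixing across a gap `s` with `β + φ s < 1` then shows that a cylinder with at least
`j s` coordinates has mass at most `ρ ^ j` for some `ρ < 1`. For `m < n` with `q m < q n`, right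
`D`-nesting makes `E n` extend at least `t - D` coordinates beyond the right end of `E m`, where
`t = q n - q m`. Mixing across the first half of this stretch and decay along the second half give
`P(E m ∩ E n) ≤ P(E m) (P(E n) + Φ t)` with `Φ t = φ ((t - D) / 2 + 1) + ρ ^ ((t - D) / 2s)`
summable. As the fibres of `q` have at most `K` points and `q` has at most `K` inversions,
`Var S_N ≤ C (A_N + 1)`.

Chebyshev's inequality and Borel–Cantelli along indices `N_k` with `A_{N_k} ≈ k²` give
`S_{N_k} / A_{N_k} → 1` almost surely; as `S_N`, `A_N` are monotone and
`A_{N_{k+1}} / A_{N_k} → 1`, this extends to all `N`.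
-/

open Finset ProbabilityTheory Topology

lemma exists_le_lt_add_one_of_tendsto {A : ℕ → ℝ} (hA : Tendsto A atTop atTop)
    (hstep : ∀ N, A (N + 1) ≤ A N + 1) {y : ℝ} (hy : A 0 < y) :
    ∃ N, y ≤ A N ∧ A N < y + 1 := by
  classical
  have hex : ∃ N, y ≤ A N := (hA.eventually_ge_atTop y).exists
  obtain ⟨M, hM⟩ : ∃ M, Nat.find hex = M + 1 :=
    Nat.exists_eq_succ_of_ne_zero fun h => by linarith [h ▸ Nat.find_spec hex]
  have hM' : A M < y := not_le.1 (Nat.find_min hex (by omega))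
  exact ⟨M + 1, hM ▸ Nat.find_spec hex, by linarith [hstep M]⟩

lemma exists_mem_Ico_of_tendsto_atTop {n : ℕ → ℕ} (hn : Tendsto n atTop atTop) {k₀ N : ℕ}
    (h : n k₀ ≤ N) : ∃ k, k₀ ≤ k ∧ N ∈ Set.Ico (n k) (n (k + 1)) := by
  by_contra! H
  have hle : ∀ k, k₀ ≤ k → n k ≤ N := fun k hk => by
    induction k, hk using Nat.le_induction with
    | base => exact h
    | succ k hk ih => exact not_lt.1 fun hlt => H k hk ⟨ih, hlt⟩
  obtain ⟨k, hk, hk₀⟩ := ((hn.eventually_gt_atTop N).and (eventually_ge_atTop k₀)).exists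
  exact (hle k hk₀).not_gt hk

lemma tendsto_div_of_tendsto_div_subseq {S A : ℕ → ℝ} {n : ℕ → ℕ}
    (hS0 : ∀ N, 0 ≤ S N) (hS : Monotone S) (hA : Monotone A) (hApos : ∀ k, 0 < A (n k))
    (hn : Tendsto n atTop atTop)
    (hSA : Tendsto (fun k => S (n k) / A (n k)) atTop (𝓝 1))
    (hAA : Tendsto (fun k => A (n (k + 1)) / A (n k)) atTop (𝓝 1)) :
    Tendsto (fun N => S N / A N) atTop (𝓝 1) := by
  have hup : Tendsto (fun k => S (n (k + 1)) / A (n k)) atTop (𝓝 1) := by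
    have h := (hSA.comp (tendsto_add_atTop_nat 1)).mul hAA
    rw [mul_one] at h
    refine h.congr fun k => ?_
    have := (hApos (k + 1)).ne'
    simp only [Function.comp_apply]
    field_simp
  have hlo : Tendsto (fun k => S (n k) / A (n (k + 1))) atTop (𝓝 1) := by
    have h := hSA.div hAA one_ne_zero
    rw [div_one] at h
    refine h.congr fun k => ?_
    have := (hApos k).ne'
    simp only [Pi.div_apply]
    field_simp
  rw [Metric.tendsto_atTop]
  intro ε hε
  obtain ⟨k₀, hk₀⟩ := eventually_atTop.1 ((hup.eventually (Metric.ball_mem_nhds 1 hε)).and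
    (hlo.eventually (Metric.ball_mem_nhds 1 hε)))
  refine ⟨n k₀, fun N hN => ?_⟩
  obtain ⟨k, hk, hkN, hNk⟩ := exists_mem_Ico_of_tendsto_atTop hn hN
  obtain ⟨hU, hL⟩ := hk₀ k hk
  have hU' : S N / A N ≤ S (n (k + 1)) / A (n k) :=
    div_le_div₀ (hS0 _) (hS hNk.le) (hApos k) (hA hkN)
  have hL' : S (n k) / A (n (k + 1)) ≤ S N / A N :=
    div_le_div₀ (hS0 _) (hS hkN) ((hApos k).trans_le (hA hkN)) (hA hNk.le)
  rw [Real.dist_eq, abs_sub_lt_iff] at hU hL ⊢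
  constructor <;> linarith

lemma tendsto_succ_div_of_sq_le_lt {B : ℕ → ℝ}
    (hB : ∀ k : ℕ, ((k : ℝ) + 1) ^ 2 ≤ B k ∧ B k < ((k : ℝ) + 1) ^ 2 + 1) :
    Tendsto (fun k => B (k + 1) / B k) atTop (𝓝 1) := by
  have hlim : Tendsto (fun k : ℕ => 1 + 4 * (1 / ((k : ℝ) + 1))) atTop (𝓝 1) := by
    simpa using ((tendsto_one_div_add_atTop_nhds_zero_nat (𝕜 := ℝ)).const_mul 4).const_add 1
  refine tendsto_of_tendsto_of_tendsto_of_le_of_le tendsto_const_nhds hlim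
    (fun k : ℕ => ?_) fun k : ℕ => ?_
  all_goals
    obtain ⟨h₁, h₂⟩ := hB k
    obtain ⟨h₃, h₄⟩ := hB (k + 1)
    have hpos : 0 < B k := lt_of_lt_of_le (by positivity) h₁
    push_cast at h₃ h₄
  · rw [le_div_iff₀ hpos]; nlinarith [k.cast_nonneg (α := ℝ)]
  · have hk : (k : ℝ) + 1 ≤ B k / ((k : ℝ) + 1) := by
      rw [le_div_iff₀ (by positivity)]; nlinarith
    calc B (k + 1) / B k ≤ (B k + 4 * (B k / ((k : ℝ) + 1))) / B k := by
          gcongr; nlinarith [k.cast_nonneg (α := ℝ)]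
      _ = 1 + 4 * (1 / ((k : ℝ) + 1)) := by field_simp

lemma sum_sum_eq_sum_diag_add_two_mul {c : ℕ → ℕ → ℝ} (hc : ∀ m n, c m n = c n m)
    (s : Finset ℕ) :
    ∑ m ∈ s, ∑ n ∈ s, c m n
      = ∑ m ∈ s, c m m + 2 * ∑ m ∈ s, ∑ n ∈ s, if m < n then c m n else 0 := by
  have hsplit : ∀ m n, c m n = (if m = n then c m n else 0) + (if m < n then c m n else 0)
      + (if n < m then c m n else 0) := fun m n => by
    rcases lt_trichotomy m n with h | rfl | h
    · simp [h, h.ne, h.not_gt]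
    · simp
    · simp [h, h.ne', h.not_gt]
  have hswap : ∑ m ∈ s, ∑ n ∈ s, (if n < m then c m n else 0)
      = ∑ m ∈ s, ∑ n ∈ s, if m < n then c m n else 0 := by
    rw [sum_comm]
    exact sum_congr rfl fun _ _ => sum_congr rfl fun _ _ => by rw [hc]
  rw [sum_congr rfl fun m _ => sum_congr rfl fun n _ => hsplit m n]
  simp only [sum_add_distrib, hswap, sum_ite_eq]
  rw [sum_congr rfl fun m hm => if_pos hm]
  ring

lemma card_filter_le_of_ncard_le {ι : Type*} {S : Set ι} {K : ℕ}
    (hS : S.Finite ∧ S.ncard ≤ K) (t : Finset ι) (p : ι → Prop) [DecidablePred p]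
    (hp : ∀ i ∈ t, p i → i ∈ S) : #{i ∈ t | p i} ≤ K := by
  rw [← Set.ncard_coe_finset]
  refine (Set.ncard_le_ncard (fun i hi => ?_) hS.1).trans hS.2
  rw [Finset.mem_coe, Finset.mem_filter] at hi
  exact hp i hi.1 hi.2

lemma sum_comp_le_mul_tsum_of_card_fiber_le {ι : Type*} {f : ℕ → ℝ} (hf0 : ∀ n, 0 ≤ f n)
    (hf : Summable f) {u : ι → ℕ} {s : Finset ι} {κ : ℕ}
    (hu : ∀ v, #{t ∈ s | u t = v} ≤ κ) : ∑ t ∈ s, f (u t) ≤ κ * ∑' n, f n := by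
  classical
  calc ∑ t ∈ s, f (u t) = ∑ v ∈ s.image u, #{t ∈ s | u t = v} • f v := sum_comp f u
    _ ≤ ∑ v ∈ s.image u, κ * f v := sum_le_sum fun v _ => by
      rw [nsmul_eq_mul]; exact mul_le_mul_of_nonneg_right (by exact_mod_cast hu v) (hf0 v)
    _ = κ * ∑ v ∈ s.image u, f v := (mul_sum _ _ _).symm
    _ ≤ κ * ∑' n, f n := by gcongr; exact hf.sum_le_tsum _ fun n _ => hf0 n

lemma summable_comp_sub_div {f : ℕ → ℝ} (hf0 : ∀ n, 0 ≤ f n) (hf : Summable f) (d : ℕ) {c : ℕ}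
    (hc : 0 < c) : Summable fun t => f ((t - d) / c) := by
  refine summable_of_sum_le (fun t => hf0 _) fun s =>
    sum_comp_le_mul_tsum_of_card_fiber_le hf0 hf (κ := d + c) fun v => ?_
  calc #{t ∈ s | (t - d) / c = v} ≤ #(Ico (c * v) (c * v + (d + c))) :=
        card_le_card fun t ht => by
          rw [mem_filter] at ht
          have h₁ := Nat.div_add_mod (t - d) c
          have h₂ := Nat.mod_lt (t - d) hc
          rw [ht.2] at h₁
          rw [mem_Ico]; omega
    _ = d + c := by simp

def correlationBound (φ : ℕ → ℝ) (ρ : ℝ) (s D t : ℕ) : ℝ :=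
  φ ((t - D) / 2 + 1) + ρ ^ ((t - D) / (2 * s))

lemma summable_correlationBound {φ : ℕ → ℝ} (hφ0 : ∀ k, 0 ≤ φ k) (hφ : Summable φ) {ρ : ℝ}
    (hρ0 : 0 ≤ ρ) (hρ1 : ρ < 1) {s : ℕ} (hs : 0 < s) (D : ℕ) :
    Summable (correlationBound φ ρ s D) :=
  (summable_comp_sub_div (fun k => hφ0 (k + 1)) ((summable_nat_add_iff 1).2 hφ) D two_pos).add
    (summable_comp_sub_div (pow_nonneg hρ0) (summable_geometric_of_lt_one hρ0 hρ1) D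
      (by positivity))

section Correlation

variable {q : ℕ → ℕ} {K : ℕ} {a : ℕ → ℝ} {c : ℕ → ℕ → ℝ} {Φ : ℕ → ℝ}

lemma sum_sum_ite_lt_le
    (hq1 : ∀ k : ℕ, {n : ℕ | q n = k}.Finite ∧ {n : ℕ | q n = k}.ncard ≤ K)
    (hq2 : {p : ℕ × ℕ | p.1 < p.2 ∧ q p.2 ≤ q p.1}.Finite ∧
      {p : ℕ × ℕ | p.1 < p.2 ∧ q p.2 ≤ q p.1}.ncard ≤ K)
    (ha : ∀ n, 0 ≤ a n) (hΦ0 : ∀ t, 0 ≤ Φ t) (hΦ : Summable Φ) (hc1 : ∀ m n, c m n ≤ 1)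
    (hcΦ : ∀ m n, m < n → q m < q n → c m n ≤ a m * Φ (q n - q m)) (s : Finset ℕ) :
    ∑ m ∈ s, ∑ n ∈ s, (if m < n then c m n else 0)
      ≤ K + K * (∑' t, Φ t) * ∑ m ∈ s, a m := by
  have hpt : ∀ m n, (if m < n then c m n else 0) ≤ (if m < n ∧ q n ≤ q m then 1 else 0)
      + (if q m < q n then a m * Φ (q n - q m) else 0) := fun m n => by
    have := mul_nonneg (ha m) (hΦ0 (q n - q m))
    split_ifs with hmn hbad hgood hgood <;> try omega
    · linarith [hc1 m n]
    · linarith [hcΦ m n hmn hgood]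
    · linarith
    · linarith
  have hbad : ∑ m ∈ s, ∑ n ∈ s, (if m < n ∧ q n ≤ q m then (1 : ℝ) else 0) ≤ K := by
    rw [← sum_product' s s (fun m n => if m < n ∧ q n ≤ q m then (1 : ℝ) else 0), sum_boole]
    exact_mod_cast card_filter_le_of_ncard_le hq2 _ _ fun p _ hp => hp
  have hgood : ∀ m, ∑ n ∈ s, (if q m < q n then a m * Φ (q n - q m) else 0)
      ≤ a m * (K * ∑' t, Φ t) := fun m => by
    rw [← sum_filter, ← mul_sum]
    refine mul_le_mul_of_nonneg_left
      (sum_comp_le_mul_tsum_of_card_fiber_le hΦ0 hΦ fun v => ?_) (ha m)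
    rw [filter_filter]
    exact card_filter_le_of_ncard_le (hq1 (q m + v)) _ _ fun n _ hn => by
      simp only [Set.mem_ofPred_eq]; omega
  calc ∑ m ∈ s, ∑ n ∈ s, (if m < n then c m n else 0)
      ≤ ∑ m ∈ s, ∑ n ∈ s, ((if m < n ∧ q n ≤ q m then 1 else 0)
        + (if q m < q n then a m * Φ (q n - q m) else 0)) :=
        sum_le_sum fun m _ => sum_le_sum fun n _ => hpt m n
    _ ≤ K + ∑ m ∈ s, a m * (K * ∑' t, Φ t) := by
        simp only [sum_add_distrib]; gcongr with m; exact hgood m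
    _ = K + K * (∑' t, Φ t) * ∑ m ∈ s, a m := by rw [← sum_mul, mul_comm]

lemma sum_sum_le_mul_sum_add_one
    (hq1 : ∀ k : ℕ, {n : ℕ | q n = k}.Finite ∧ {n : ℕ | q n = k}.ncard ≤ K)
    (hq2 : {p : ℕ × ℕ | p.1 < p.2 ∧ q p.2 ≤ q p.1}.Finite ∧
      {p : ℕ × ℕ | p.1 < p.2 ∧ q p.2 ≤ q p.1}.ncard ≤ K)
    (ha : ∀ n, 0 ≤ a n) (hΦ0 : ∀ t, 0 ≤ Φ t) (hΦ : Summable Φ) (hc : ∀ m n, c m n = c n m)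
    (hdiag : ∀ m, c m m ≤ a m) (hc1 : ∀ m n, c m n ≤ 1)
    (hcΦ : ∀ m n, m < n → q m < q n → c m n ≤ a m * Φ (q n - q m)) (s : Finset ℕ) :
    ∑ m ∈ s, ∑ n ∈ s, c m n ≤ (1 + 2 * K * (1 + ∑' t, Φ t)) * (∑ m ∈ s, a m + 1) := by
  rw [sum_sum_eq_sum_diag_add_two_mul hc]
  have hdiag_sum : ∑ m ∈ s, c m m ≤ ∑ m ∈ s, a m := sum_le_sum fun m _ => hdiag m
  have hlt := sum_sum_ite_lt_le hq1 hq2 ha hΦ0 hΦ hc1 hcΦ s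
  have hA : 0 ≤ ∑ m ∈ s, a m := sum_nonneg fun m _ => ha m
  have hT : 0 ≤ ∑' t, Φ t := tsum_nonneg hΦ0
  have hK : (0 : ℝ) ≤ K := K.cast_nonneg
  nlinarith [mul_nonneg hK hA, mul_nonneg hK hT]

end Correlation

lemma ae_tendsto_of_forall_tsum_measure_ne_top {Ω : Type*} [MeasurableSpace Ω] {μ : Measure Ω}
    {Y : ℕ → Ω → ℝ} {c : ℝ} (h : ∀ ε > 0, ∑' k, μ {ω | ε ≤ |Y k ω - c|} ≠ ⊤) :
    ∀ᵐ ω ∂μ, Tendsto (fun k => Y k ω) atTop (𝓝 c) := by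
  have hj : ∀ j : ℕ, ∀ᵐ ω ∂μ, ∀ᶠ k in atTop, ω ∉ {ω | 1 / ((j : ℝ) + 1) ≤ |Y k ω - c|} :=
    fun j => ae_eventually_notMem (h _ Nat.one_div_pos_of_nat)
  filter_upwards [ae_all_iff.2 hj] with ω hω
  rw [Metric.tendsto_nhds]
  intro ε hε
  obtain ⟨j, hj⟩ := exists_nat_one_div_lt hε
  filter_upwards [hω j] with k hk
  rw [not_le] at hk
  rw [Real.dist_eq]
  linarith

section Indicators

variable {Ω : Type*} [MeasurableSpace Ω] {μ : Measure Ω} [IsProbabilityMeasure μ]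

lemma covariance_indicator_one {s t : Set Ω} (hs : MeasurableSet s) (ht : MeasurableSet t) :
    cov[s.indicator 1, t.indicator 1; μ] = μ.real (s ∩ t) - μ.real s * μ.real t := by
  have hs2 : MemLp (s.indicator (1 : Ω → ℝ)) 2 μ :=
    memLp_indicator_const 2 hs (1 : ℝ) (Or.inr (measure_ne_top μ s))
  have ht2 : MemLp (t.indicator (1 : Ω → ℝ)) 2 μ :=
    memLp_indicator_const 2 ht (1 : ℝ) (Or.inr (measure_ne_top μ t))
  rw [covariance_eq_sub hs2 ht2, ← Set.inter_indicator_one,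
    integral_indicator_one (hs.inter ht), integral_indicator_one hs, integral_indicator_one ht]

lemma sum_sum_measureReal_inter_sub_le {E : ℕ → Set Ω} {q : ℕ → ℕ} {K : ℕ} {Φ : ℕ → ℝ}
    (hq1 : ∀ k : ℕ, {n : ℕ | q n = k}.Finite ∧ {n : ℕ | q n = k}.ncard ≤ K)
    (hq2 : {p : ℕ × ℕ | p.1 < p.2 ∧ q p.2 ≤ q p.1}.Finite ∧
      {p : ℕ × ℕ | p.1 < p.2 ∧ q p.2 ≤ q p.1}.ncard ≤ K)
    (hΦ0 : ∀ t, 0 ≤ Φ t) (hΦ : Summable Φ)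
    (hpair : ∀ m n, m < n → q m < q n →
      μ.real (E m ∩ E n) ≤ μ.real (E m) * (μ.real (E n) + Φ (q n - q m)))
    (s : Finset ℕ) :
    ∑ m ∈ s, ∑ n ∈ s, (μ.real (E m ∩ E n) - μ.real (E m) * μ.real (E n))
      ≤ (1 + 2 * K * (1 + ∑' t, Φ t)) * (∑ n ∈ s, μ.real (E n) + 1) :=
  sum_sum_le_mul_sum_add_one hq1 hq2 (fun n => measureReal_nonneg) hΦ0 hΦ
    (fun m n => by rw [Set.inter_comm, mul_comm])
    (fun m => by simp only [Set.inter_self]; nlinarith [measureReal_nonneg (μ := μ) (s := E m)])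
    (fun m n => by nlinarith [measureReal_le_one (μ := μ) (s := E m ∩ E n),
      measureReal_nonneg (μ := μ) (s := E m), measureReal_nonneg (μ := μ) (s := E n)])
    (fun m n hmn hq => by linarith [hpair m n hmn hq]) s

lemma measure_le_abs_sum_indicator_sub_le {E : ℕ → Set Ω} (hE : ∀ n, MeasurableSet (E n))
    (s : Finset ℕ) {c : ℝ} (hc : 0 < c) :
    μ {ω | c ≤ |∑ n ∈ s, (E n).indicator 1 ω - ∑ n ∈ s, μ.real (E n)|} ≤ ENNReal.ofReal
      ((∑ m ∈ s, ∑ n ∈ s, (μ.real (E m ∩ E n) - μ.real (E m) * μ.real (E n))) / c ^ 2) := by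
  have hL2 : ∀ n ∈ s, MemLp ((E n).indicator (1 : Ω → ℝ)) 2 μ :=
    fun n _ => memLp_indicator_const 2 (hE n) (1 : ℝ) (Or.inr (measure_ne_top μ _))
  have hmean : μ[∑ n ∈ s, (E n).indicator (1 : Ω → ℝ)] = ∑ n ∈ s, μ.real (E n) := by
    simp only [Finset.sum_apply]
    rw [integral_finsetSum s fun n hn => (hL2 n hn).integrable one_le_two]
    exact Finset.sum_congr rfl fun n _ => integral_indicator_one (hE n)
  have hvar : Var[∑ n ∈ s, (E n).indicator (1 : Ω → ℝ); μ]
      = ∑ m ∈ s, ∑ n ∈ s, (μ.real (E m ∩ E n) - μ.real (E m) * μ.real (E n)) := by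
    rw [← covariance_self (memLp_finsetSum' s hL2).aemeasurable, covariance_sum_sum' hL2 hL2]
    exact Finset.sum_congr rfl fun m _ => Finset.sum_congr rfl fun n _ =>
      covariance_indicator_one (hE m) (hE n)
  have h := meas_ge_le_variance_div_sq (memLp_finsetSum' s hL2) hc
  rw [hmean, hvar] at h
  simpa only [Finset.sum_apply] using h

lemma measure_le_abs_sum_indicator_div_sub_one_le {E : ℕ → Set Ω}
    (hE : ∀ n, MeasurableSet (E n)) {C : ℝ} (hC : 0 ≤ C) {s : Finset ℕ}
    (hcov : ∑ m ∈ s, ∑ n ∈ s, (μ.real (E m ∩ E n) - μ.real (E m) * μ.real (E n))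
      ≤ C * (∑ n ∈ s, μ.real (E n) + 1))
    (hA : 1 ≤ ∑ n ∈ s, μ.real (E n)) {ε : ℝ} (hε : 0 < ε) :
    μ {ω | ε ≤ |(∑ n ∈ s, (E n).indicator 1 ω) / ∑ n ∈ s, μ.real (E n) - 1|}
      ≤ ENNReal.ofReal (2 * C / ε ^ 2 * (1 / ∑ n ∈ s, μ.real (E n))) := by
  set A := ∑ n ∈ s, μ.real (E n)
  have hApos : 0 < A := by linarith
  have hsub : {ω | ε ≤ |(∑ n ∈ s, (E n).indicator 1 ω) / A - 1|}
      ⊆ {ω | ε * A ≤ |∑ n ∈ s, (E n).indicator 1 ω - A|} := fun ω hω => by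
    rwa [Set.mem_ofPred_eq, div_sub_one hApos.ne', abs_div, abs_of_pos hApos,
      le_div_iff₀ hApos] at hω
  refine (measure_mono hsub).trans ((measure_le_abs_sum_indicator_sub_le hE s
    (mul_pos hε hApos)).trans (ENNReal.ofReal_le_ofReal ?_))
  calc _ ≤ C * (2 * A) / (ε * A) ^ 2 := by
        gcongr; exact hcov.trans (mul_le_mul_of_nonneg_left (by linarith) hC)
    _ = 2 * C / ε ^ 2 * (1 / A) := by field_simp

theorem ae_tendsto_sum_indicator_div_of_sum_sum_le {E : ℕ → Set Ω}
    (hE : ∀ n, MeasurableSet (E n)) {C : ℝ}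
    (hcov : ∀ N, ∑ m ∈ Icc 1 N, ∑ n ∈ Icc 1 N,
      (μ.real (E m ∩ E n) - μ.real (E m) * μ.real (E n)) ≤ C * (∑ n ∈ Icc 1 N, μ.real (E n) + 1))
    (hdiv : Tendsto (fun N => ∑ n ∈ Icc 1 N, μ.real (E n)) atTop atTop) :
    ∀ᵐ ω ∂μ, Tendsto (fun N => (∑ n ∈ Icc 1 N, (E n).indicator 1 ω) /
      ∑ n ∈ Icc 1 N, μ.real (E n)) atTop (𝓝 1) := by
  set A : ℕ → ℝ := fun N => ∑ n ∈ Icc 1 N, μ.real (E n) with hAdef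
  have hA : Monotone A := fun N N' h =>
    sum_le_sum_of_subset_of_nonneg (Icc_subset_Icc_right h) fun _ _ _ => measureReal_nonneg
  have hAle : ∀ N, A N ≤ N := fun N => by
    simpa using sum_le_card_nsmul (Icc 1 N) _ 1 fun n _ => measureReal_le_one (μ := μ) (s := E n)
  have hstep : ∀ N, A (N + 1) ≤ A N + 1 := fun N => by
    simp only [hAdef, sum_Icc_succ_top (by omega : 1 ≤ N + 1)]
    linarith [measureReal_le_one (μ := μ) (s := E (N + 1))]
  choose n hn using fun k : ℕ =>
    exists_le_lt_add_one_of_tendsto hdiv hstep (y := ((k : ℝ) + 1) ^ 2) (by simp [A]; positivity)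
  have hApos : ∀ k, 0 < A (n k) := fun k => lt_of_lt_of_le (by positivity) (hn k).1
  have hn_tendsto : Tendsto n atTop atTop := by
    refine tendsto_atTop_mono (fun k => ?_) tendsto_id
    have : (k : ℝ) ≤ n k := by nlinarith [(hn k).1, hAle (n k)]
    exact_mod_cast this
  have hC : 0 ≤ C := by simpa using hcov 0
  have hsubseq : ∀ᵐ ω ∂μ, Tendsto (fun k => (∑ n ∈ Icc 1 (n k), (E n).indicator 1 ω) / A (n k))
      atTop (𝓝 1) := by
    refine ae_tendsto_of_forall_tsum_measure_ne_top fun ε hε => ?_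
    have hsum : Summable fun k : ℕ => 2 * C / ε ^ 2 * (1 / ((k : ℝ) + 1) ^ 2) := by
      refine Summable.mul_left _ ?_
      exact_mod_cast (summable_nat_add_iff 1).2 (Real.summable_one_div_nat_pow.2 one_lt_two)
    have hbound : ∀ k, μ {ω | ε ≤ |(∑ n ∈ Icc 1 (n k), (E n).indicator 1 ω) / A (n k) - 1|}
        ≤ ENNReal.ofReal (2 * C / ε ^ 2 * (1 / ((k : ℝ) + 1) ^ 2)) := fun k =>
      (measure_le_abs_sum_indicator_div_sub_one_le hE hC (hcov (n k))
        (le_trans (by nlinarith [k.cast_nonneg (α := ℝ)]) (hn k).1) hε).trans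
      (ENNReal.ofReal_le_ofReal (by gcongr; exact (hn k).1))
    refine ne_top_of_le_ne_top ?_ (ENNReal.tsum_le_tsum hbound)
    rw [← ENNReal.ofReal_tsum_of_nonneg (fun k => by positivity) hsum]
    exact ENNReal.ofReal_ne_top
  filter_upwards [hsubseq] with ω hω
  have hS0 : ∀ n, 0 ≤ (E n).indicator (1 : Ω → ℝ) ω :=
    fun n => Set.indicator_nonneg (fun _ _ => zero_le_one) ω
  exact tendsto_div_of_tendsto_div_subseq (fun N => sum_nonneg fun n _ => hS0 n)
    (fun N N' h => sum_le_sum_of_subset_of_nonneg (Icc_subset_Icc_right h) fun n _ _ => hS0 n)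
    hA hApos hn_tendsto hω (tendsto_succ_div_of_sq_le_lt hn)

end Indicators

section Shift

variable {𝒜 : Type*}

lemma shf_iterate_apply (k : ℕ) (ω : ℤ → 𝒜) (i : ℤ) : shf^[k] ω i = ω (i + k) := by
  induction k generalizing ω with
  | zero => simp
  | succ k ih =>
    rw [Function.iterate_succ_apply, ih, shf]
    push_cast
    ring_nf

lemma preimage_shf_iterate_cylEvent (k : ℕ) (l r : ℤ) (f : ℤ → 𝒜) :
    shf^[k] ⁻¹' cylEvent l r f = cylEvent (l + k) (r + k) (fun j => f (j - k)) := by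
  ext ω
  simp only [Set.mem_preimage, cylEvent, Set.mem_ofPred_eq, shf_iterate_apply]
  constructor
  · intro h j hl hr
    simpa using h (j - k) (by omega) (by omega)
  · intro h i hl hr
    simpa using h (i + k) (by omega) (by omega)

lemma preimage_shf_iterate_coord (k : ℕ) (i : ℤ) (a : 𝒜) :
    shf^[k] ⁻¹' {ω | ω i = a} = {ω | ω (i + k) = a} := by
  ext ω
  simp [shf_iterate_apply]

lemma cylEvent_eq_biInter (l r : ℤ) (f : ℤ → 𝒜) :
    cylEvent l r f = ⋂ i ∈ Set.Icc l r, {ω | ω i = f i} := by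
  ext ω
  simp [cylEvent]

lemma cylEvent_self (i : ℤ) (f : ℤ → 𝒜) : cylEvent i i f = {ω | ω i = f i} := by
  simp [cylEvent_eq_biInter]

lemma cylEvent_subset_inter (l r : ℤ) (s : ℕ) (f : ℤ → 𝒜) (h : l ≤ r) :
    cylEvent l r f ⊆ cylEvent l (r - s) f ∩ {ω | ω r = f r} :=
  fun ω hω => ⟨fun i hl hr => hω i hl (by omega), hω r h le_rfl⟩

lemma measurableSet_pastAlg_cylEvent (l r : ℤ) (f : ℤ → 𝒜) :
    MeasurableSet[pastAlg r] (cylEvent l r f) :=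
  MeasurableSpace.measurableSet_generateFrom ⟨l, f, rfl⟩

lemma measurableSet_futureAlg_cylEvent [Countable 𝒜] {m l : ℤ} (h : m ≤ l) (r : ℤ)
    (f : ℤ → 𝒜) : MeasurableSet[futureAlg m] (cylEvent l r f) := by
  classical
  -- the coordinates in `[m, l)` are left free by taking a countable union over their values
  have hunion : cylEvent l r f = ⋃ g : Set.Ico m l → 𝒜,
      cylEvent m r (fun i => if hi : i ∈ Set.Ico m l then g ⟨i, hi⟩ else f i) := by
    ext ω
    simp only [Set.mem_iUnion, cylEvent, Set.mem_ofPred_eq]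
    constructor
    · refine fun hω => ⟨fun i => ω i, fun i hm hr => ?_⟩
      split_ifs with hi
      · rfl
      · exact hω i (by rw [Set.mem_Ico] at hi; omega) hr
    · rintro ⟨g, hg⟩ i hl hr
      simpa [Set.mem_Ico, show ¬ i < l by omega] using hg i (h.trans hl) hr
  rw [hunion]
  exact MeasurableSet.iUnion fun g => MeasurableSpace.measurableSet_generateFrom ⟨r, _, rfl⟩

variable [MeasurableSpace 𝒜] [MeasurableSingletonClass 𝒜]

lemma measurableSet_coord (i : ℤ) (a : 𝒜) : MeasurableSet {ω : ℤ → 𝒜 | ω i = a} :=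
  (measurableSet_singleton a).preimage (measurable_pi_apply i)

lemma measurableSet_cylEvent (l r : ℤ) (f : ℤ → 𝒜) : MeasurableSet (cylEvent l r f) := by
  rw [cylEvent_eq_biInter]
  exact MeasurableSet.biInter (Set.to_countable _) fun i _ => measurableSet_coord i (f i)

variable {μ : Measure (ℤ → 𝒜)}

lemma measure_coord_eq (hT : MeasurePreserving shf μ μ) (i : ℤ) (a : 𝒜) :
    μ {ω | ω i = a} = μ {ω | ω 0 = a} := by
  have key : ∀ (j : ℤ) (k : ℕ), μ {ω | ω (j + k) = a} = μ {ω | ω j = a} := fun j k => by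
    rw [← preimage_shf_iterate_coord,
      (hT.iterate k).measure_preimage (measurableSet_coord j a).nullMeasurableSet]
  rcases le_or_gt 0 i with hi | hi
  · have h := key 0 i.toNat
    rwa [show 0 + (i.toNat : ℤ) = i by omega] at h
  · have h := key i (-i).toNat
    rw [show i + ((-i).toNat : ℤ) = 0 by omega] at h
    exact h.symm

lemma exists_measureReal_coord_le [Nontrivial 𝒜] [IsProbabilityMeasure μ]
    (hT : MeasurePreserving shf μ μ) (ha : ∀ a : 𝒜, 0 < μ {ω | ω 0 = a}) :
    ∃ β, 0 ≤ β ∧ β < 1 ∧ ∀ i a, μ.real {ω | ω i = a} ≤ β := by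
  obtain ⟨a₀, b₀, hab⟩ := exists_pair_ne 𝒜
  have hpos : ∀ a, 0 < μ.real {ω | ω 0 = a} :=
    fun a => ENNReal.toReal_pos (ha a).ne' (measure_ne_top _ _)
  have hcompl : ∀ a b, a ≠ b → μ.real {ω | ω 0 = a} ≤ 1 - μ.real {ω | ω 0 = b} := by
    intro a b hab
    rw [← probReal_compl_eq_one_sub (measurableSet_coord 0 b)]
    exact measureReal_mono fun ω hω hω' => hab (hω.symm.trans hω')
  refine ⟨1 - min (μ.real {ω | ω 0 = a₀}) (μ.real {ω | ω 0 = b₀}), ?_, ?_, fun i a => ?_⟩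
  · linarith [min_le_left (μ.real {ω | ω 0 = a₀}) (μ.real {ω | ω 0 = b₀}),
      measureReal_le_one (μ := μ) (s := {ω | ω 0 = a₀})]
  · linarith [lt_min (hpos a₀) (hpos b₀)]
  rw [measureReal_def, measure_coord_eq hT, ← measureReal_def]
  rcases eq_or_ne a a₀ with rfl | h
  · linarith [hcompl a b₀ hab, min_le_right (μ.real {ω | ω 0 = a}) (μ.real {ω | ω 0 = b₀})]
  · linarith [hcompl a a₀ h, min_le_left (μ.real {ω | ω 0 = a₀}) (μ.real {ω | ω 0 = b₀})]

end Shift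

section Mixing

variable {𝒜 : Type*} [MeasurableSpace 𝒜] {μ : Measure (ℤ → 𝒜)} {φ : ℕ → ℝ}

def PhiMixing (μ : Measure (ℤ → 𝒜)) (φ : ℕ → ℝ) : Prop :=
  ∀ (m : ℤ) (k : ℕ) (A B : Set (ℤ → 𝒜)),
    MeasurableSet[pastAlg m] A → MeasurableSet[futureAlg (m + k)] B → μ A ≠ 0 →
    |(μ (A ∩ B)).toReal / (μ A).toReal - (μ B).toReal| ≤ φ k

namespace PhiMixing

variable [IsProbabilityMeasure μ]

lemma nonneg (h : PhiMixing μ φ) (k : ℕ) : 0 ≤ φ k :=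
  (abs_nonneg _).trans
    (h 0 k Set.univ ∅ MeasurableSet.univ (@MeasurableSet.empty _ (futureAlg _)) (by simp))

lemma measureReal_inter_le (h : PhiMixing μ φ) {m : ℤ} {k : ℕ} {A B : Set (ℤ → 𝒜)}
    (hA : MeasurableSet[pastAlg m] A) (hB : MeasurableSet[futureAlg (m + k)] B) :
    μ.real (A ∩ B) ≤ μ.real A * (μ.real B + φ k) := by
  rcases eq_or_ne (μ A) 0 with hA0 | hA0
  · simp [measureReal_def, measure_mono_null Set.inter_subset_left hA0, hA0]
  have hpos : 0 < μ.real A := ENNReal.toReal_pos hA0 (measure_ne_top μ A)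
  have hmix := (abs_le.1 (h m k A B hA hB hA0)).2
  rwa [← measureReal_def, ← measureReal_def, ← measureReal_def, sub_le_iff_le_add',
    div_le_iff₀' hpos] at hmix

lemma measureReal_cylEvent_le_mul (h : PhiMixing μ φ) {β : ℝ}
    (hβ : ∀ i a, μ.real {ω | ω i = a} ≤ β) (s : ℕ) {l r : ℤ} (hlr : l ≤ r) (f : ℤ → 𝒜) :
    μ.real (cylEvent l r f) ≤ (β + φ s) * μ.real (cylEvent l (r - s) f) := by
  have hB : MeasurableSet[futureAlg (r - s + (s : ℕ))] {ω : ℤ → 𝒜 | ω r = f r} := by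
    rw [sub_add_cancel, ← cylEvent_self]
    exact MeasurableSpace.measurableSet_generateFrom ⟨r, f, rfl⟩
  calc μ.real (cylEvent l r f)
      ≤ μ.real (cylEvent l (r - s) f ∩ {ω | ω r = f r}) :=
        measureReal_mono (cylEvent_subset_inter l r s f hlr)
    _ ≤ μ.real (cylEvent l (r - s) f) * (μ.real {ω | ω r = f r} + φ s) :=
        h.measureReal_inter_le (measurableSet_pastAlg_cylEvent l _ f) hB
    _ ≤ (β + φ s) * μ.real (cylEvent l (r - s) f) := by
        rw [mul_comm]; gcongr; exact hβ r (f r)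

lemma measureReal_cylEvent_le_pow (h : PhiMixing μ φ) {β : ℝ}
    (hβ : ∀ i a, μ.real {ω | ω i = a} ≤ β) {s : ℕ} (hρ : 0 ≤ β + φ s) (j : ℕ) :
    ∀ (l r : ℤ) (f : ℤ → 𝒜), l + j * s ≤ r → μ.real (cylEvent l r f) ≤ (β + φ s) ^ j := by
  induction j with
  | zero => exact fun l r f _ => by simp
  | succ j ih =>
    intro l r f hj
    push_cast at hj
    calc μ.real (cylEvent l r f) ≤ (β + φ s) * μ.real (cylEvent l (r - s) f) :=
          h.measureReal_cylEvent_le_mul hβ s (by nlinarith) f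
      _ ≤ (β + φ s) * (β + φ s) ^ j := by gcongr; exact ih l (r - s) f (by linarith)
      _ = (β + φ s) ^ (j + 1) := by ring

lemma exists_measureReal_cylEvent_le_pow (h : PhiMixing μ φ) (hφ : Summable φ) {β : ℝ}
    (hβ0 : 0 ≤ β) (hβ1 : β < 1) (hβ : ∀ i a, μ.real {ω | ω i = a} ≤ β) :
    ∃ s : ℕ, 0 < s ∧ ∃ ρ : ℝ, 0 ≤ ρ ∧ ρ < 1 ∧
      ∀ (j : ℕ) (l r : ℤ) (f : ℤ → 𝒜), l + j * s ≤ r → μ.real (cylEvent l r f) ≤ ρ ^ j := by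
  obtain ⟨s, hs⟩ := ((hφ.tendsto_atTop_zero.eventually (gt_mem_nhds (sub_pos.2 hβ1))).and
    (eventually_gt_atTop 0)).exists
  exact ⟨s, hs.2, β + φ s, by linarith [h.nonneg s], by linarith [hs.1],
    h.measureReal_cylEvent_le_pow hβ (by linarith [h.nonneg s])⟩

lemma measureReal_inter_cylEvent_le_of_gap [Countable 𝒜] (h : PhiMixing μ φ) {s : ℕ} {ρ : ℝ}
    (hρ : 0 ≤ ρ)
    (hdecay : ∀ (j : ℕ) (l r : ℤ) (f : ℤ → 𝒜), l + j * s ≤ r → μ.real (cylEvent l r f) ≤ ρ ^ j)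
    {l₁ r₁ l₂ r₂ : ℤ} (f₁ f₂ : ℤ → 𝒜) {u : ℕ} (hu : r₁ + u < r₂) :
    μ.real (cylEvent l₁ r₁ f₁ ∩ cylEvent l₂ r₂ f₂) ≤ μ.real (cylEvent l₁ r₁ f₁) *
      (μ.real (cylEvent l₂ r₂ f₂) + (φ (u / 2 + 1) + ρ ^ (u / (2 * s)))) := by
  -- keep only the part of the second cylinder lying at distance `u / 2 + 1` beyond `r₁`
  set B := cylEvent (max l₂ (r₁ + (u / 2 + 1 : ℕ))) r₂ f₂
  have hB : μ.real B ≤ μ.real (cylEvent l₂ r₂ f₂) + ρ ^ (u / (2 * s)) := by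
    rcases le_total (r₁ + (u / 2 + 1 : ℕ)) l₂ with hl | hl
    · rw [show B = cylEvent l₂ r₂ f₂ by simp only [B, max_eq_left hl]]
      linarith [pow_nonneg hρ (u / (2 * s))]
    · have hwidth : u / 2 + 1 + u / (2 * s) * s ≤ u + 1 := by
        have : u / (2 * s) * s ≤ u / 2 := by
          rw [← Nat.div_div_eq_div_mul]; exact Nat.div_mul_le_self _ _
        omega
      have hwidth' : ((u / 2 + 1 : ℕ) : ℤ) + (u / (2 * s) : ℕ) * s ≤ u + 1 := by
        exact_mod_cast hwidth
      rw [show B = cylEvent (r₁ + (u / 2 + 1 : ℕ)) r₂ f₂ by simp only [B, max_eq_right hl]]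
      linarith [hdecay (u / (2 * s)) (r₁ + (u / 2 + 1 : ℕ)) r₂ f₂ (by linarith),
        measureReal_nonneg (μ := μ) (s := cylEvent l₂ r₂ f₂)]
  calc μ.real (cylEvent l₁ r₁ f₁ ∩ cylEvent l₂ r₂ f₂) ≤ μ.real (cylEvent l₁ r₁ f₁ ∩ B) :=
        measureReal_mono (Set.inter_subset_inter_right _
          fun ω hω i hi => hω i (le_of_max_le_left hi))
    _ ≤ μ.real (cylEvent l₁ r₁ f₁) * (μ.real B + φ (u / 2 + 1)) :=
        h.measureReal_inter_le (measurableSet_pastAlg_cylEvent l₁ r₁ f₁)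
          (measurableSet_futureAlg_cylEvent (le_max_right _ _) r₂ f₂)
    _ ≤ _ := mul_le_mul_of_nonneg_left (by linarith) measureReal_nonneg

lemma measureReal_inter_cylEvent_le_of_nested [Countable 𝒜] (h : PhiMixing μ φ) {s : ℕ}
    {ρ : ℝ} (hρ : 0 ≤ ρ)
    (hdecay : ∀ (j : ℕ) (l r : ℤ) (f : ℤ → 𝒜), l + j * s ≤ r → μ.real (cylEvent l r f) ≤ ρ ^ j)
    {l₁ r₁ l₂ r₂ : ℤ} (f₁ f₂ : ℤ → 𝒜) {D t : ℕ} (hnest : r₁ + t < r₂ + D) :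
    μ.real (cylEvent l₁ r₁ f₁ ∩ cylEvent l₂ r₂ f₂) ≤ μ.real (cylEvent l₁ r₁ f₁) *
      (μ.real (cylEvent l₂ r₂ f₂) + correlationBound φ ρ s D t) := by
  rcases le_or_gt t D with htD | htD
  · have hΦ : 1 ≤ correlationBound φ ρ s D t := by
      simp [correlationBound, Nat.sub_eq_zero_of_le htD, h.nonneg]
    calc μ.real (cylEvent l₁ r₁ f₁ ∩ cylEvent l₂ r₂ f₂) ≤ μ.real (cylEvent l₁ r₁ f₁) :=
          measureReal_mono Set.inter_subset_left
      _ ≤ _ := le_mul_of_one_le_right measureReal_nonneg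
          (by linarith [measureReal_nonneg (μ := μ) (s := cylEvent l₂ r₂ f₂)])
  · exact h.measureReal_inter_cylEvent_le_of_gap hρ hdecay f₁ f₂
      (by push_cast [Nat.cast_sub htD.le]; linarith)

end PhiMixing

end Mixing

theorem stmt13 {𝒜 : Type*} [MeasurableSpace 𝒜] [MeasurableSingletonClass 𝒜]
    [Countable 𝒜] [Nontrivial 𝒜]
    (μ : Measure (ℤ → 𝒜)) [IsProbabilityMeasure μ]
    (hT : MeasurePreserving (shf (𝒜 := 𝒜)) μ μ)
    (ha : ∀ a : 𝒜, 0 < μ {ω | ω 0 = a})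
    (φ : ℕ → ℝ) (hφ : Summable φ)
    (hmix : ∀ (m : ℤ) (k : ℕ) (A B : Set (ℤ → 𝒜)),
      MeasurableSet[pastAlg m] A → MeasurableSet[futureAlg (m + k)] B → μ A ≠ 0 →
      |(μ (A ∩ B)).toReal / (μ A).toReal - (μ B).toReal| ≤ φ k)
    (q : ℕ → ℕ) (K : ℕ)
    (hq1 : ∀ k : ℕ, {n : ℕ | q n = k}.Finite ∧ {n : ℕ | q n = k}.ncard ≤ K)
    (hq2 : {p : ℕ × ℕ | p.1 < p.2 ∧ q p.2 ≤ q p.1}.Finite ∧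
      {p : ℕ × ℕ | p.1 < p.2 ∧ q p.2 ≤ q p.1}.ncard ≤ K)
    (D : ℤ)
    (l r : ℕ → ℤ) (f : ℕ → ℤ → 𝒜)
    (hnest : ∀ m n : ℕ, m < n → r m < r n + D)
    (hdiv : Tendsto (fun N : ℕ =>
      ∑ n ∈ Finset.Icc 1 N, (μ (cylEvent (l n) (r n) (f n))).toReal) atTop atTop) :
    ∀ᵐ ω ∂μ, Tendsto (fun N : ℕ =>
      (∑ n ∈ Finset.Icc 1 N,
        (cylEvent (l n) (r n) (f n)).indicator (fun _ => (1 : ℝ)) (shf^[q n] ω)) /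
      (∑ n ∈ Finset.Icc 1 N, (μ (cylEvent (l n) (r n) (f n))).toReal))
      atTop (nhds 1) := by
  have hmix : PhiMixing μ φ := hmix
  set E : ℕ → Set (ℤ → 𝒜) := fun n => shf^[q n] ⁻¹' cylEvent (l n) (r n) (f n)
  have hE : ∀ n, MeasurableSet (E n) :=
    fun n => (hT.iterate (q n)).measurable (measurableSet_cylEvent _ _ _)
  have hμE : ∀ n, μ.real (E n) = (μ (cylEvent (l n) (r n) (f n))).toReal :=
    fun n => (hT.iterate (q n)).measureReal_preimage
      (measurableSet_cylEvent _ _ _).nullMeasurableSet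
  obtain ⟨β, hβ0, hβ1, hβ⟩ := exists_measureReal_coord_le hT ha
  obtain ⟨s, hs, ρ, hρ0, hρ1, hdecay⟩ :=
    PhiMixing.exists_measureReal_cylEvent_le_pow hmix hφ hβ0 hβ1 hβ
  have hpair : ∀ m n, m < n → q m < q n → μ.real (E m ∩ E n)
      ≤ μ.real (E m) * (μ.real (E n) + correlationBound φ ρ s D.toNat (q n - q m)) := by
    intro m n hmn hq
    simp only [E, preimage_shf_iterate_cylEvent]
    refine hmix.measureReal_inter_cylEvent_le_of_nested hρ0 hdecay _ _ ?_
    have := hnest m n hmn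
    push_cast [Nat.cast_sub hq.le]
    omega
  have hcov := sum_sum_measureReal_inter_sub_le hq1 hq2
    (fun t => add_nonneg (hmix.nonneg _) (pow_nonneg hρ0 _))
    (summable_correlationBound hmix.nonneg hφ hρ0 hρ1 hs D.toNat) hpair
  filter_upwards [ae_tendsto_sum_indicator_div_of_sum_sum_le hE (fun N => hcov (Icc 1 N))
    (by simpa only [hμE] using hdiv)] with ω hω
  refine hω.congr fun N => ?_
  simp only [hμE]
  rfl
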